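/- Let s be a finite list over the alphabet {L, R, V} (left bends, right bends, vertices) such that (i) s contains exactly n ≥ 1 occurrences of V, (ii) all letters before the first V are L, (iii) all letters after the last V are R, (iv) between any two consecutive occurrences of V, the letters form a (possibly empty) block of R's followed by a (possibly empty) block of L's, and (v) no block of consecutive equal letters L or R has length exceeding H/2 for a natural number H. Then the length of s is at most (H+1)·n. -/

import Mathlib

/-- Moves in the move sequence of a drawing: left bends, right bends, vertices. -/
inductive Move : Type
  | L : Move
  | R : Move
  | V : Move

open Move

/-- A simplified move sequence: `a` left bends, then `n` vertices where between
consecutive vertices there is a block of right bends followed by a block of left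
bends, and finally `d` right bends; no block exceeds `H/2`.  Then the total
length is at most `(H+1)·n`. -/
theorem stmt0 (H n : ℕ) (hn : 1 ≤ n) (s : List Move)
    (a d : ℕ) (mid : List (ℕ × ℕ))
    (hmid : mid.length = n - 1)
    (hs : s = List.replicate a Move.L ++ [Move.V] ++
      (mid.flatMap fun p => List.replicate p.1 Move.R ++ List.replicate p.2 Move.L ++ [Move.V]) ++
      List.replicate d Move.R)
    (ha : a ≤ H / 2) (hd : d ≤ H / 2)
    (hblocks : ∀ p ∈ mid, p.1 ≤ H / 2 ∧ p.2 ≤ H / 2) :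
    s.length ≤ (H + 1) * n := by
  subst hs
  obtain ⟨m, rfl⟩ : ∃ m, n = m + 1 := ⟨n - 1, by omega⟩
  have hmid' : mid.length = m := by omega
  simp only [List.length_append, List.length_replicate, List.length_flatMap,
    List.length_singleton, Function.comp_def]
  have hsum : ((mid.map fun p => p.1 + p.2 + 1).sum) ≤ (H + 1) * m := by
    calc ((mid.map fun p => p.1 + p.2 + 1).sum)
        ≤ ((mid.map fun _ => H + 1).sum) := by
            apply List.sum_le_sum
            intro p hp
            have := hblocks p hp
            omega
      _ = (H + 1) * m := by
            rw [List.map_const', List.sum_replicate, hmid', smul_eq_mul, mul_comm]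
  have key : (H + 1) * (m + 1) = (H + 1) * m + (H + 1) := by ring
  omega
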